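/- Let a, b, x₁, x₂ be real 2×2 matrices with det a = det b = det x₁ = det x₂ = 1 (i.e. all in SL(2, ℝ) ≅ AdS₃), and suppose B(x₁, a) = 0, B(x₁, b) < 0, B(x₂, b) = 0 and B(x₂, a) < 0. Then a⁻¹·x₁ ≠ b⁻¹·x₂. (Consequently the left projection of the angle in AdS₃ formed by the dual planes a* and b*, which maps points x of a* with B(x, b) < 0 to a⁻¹x and points x of b* with B(x, a) < 0 to b⁻¹x, is injective.) -/
import Mathlib


/-- The symmetric bilinear form of signature `(2,2)` on `M₂(ℝ)` associated to the
quadratic form `X ↦ -det X`: `B(X, Y) = ½(det X + det Y - det (X + Y))`. -/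
noncomputable def adsForm (X Y : Matrix (Fin 2) (Fin 2) ℝ) : ℝ :=
  (X.det + Y.det - (X + Y).det) / 2

/-- Injectivity of the left projection of the angle in `AdS₃ ≅ SL(2, ℝ)` formed by the
dual planes `a*` and `b*`: if `x₁` lies on `a*` with `B(x₁, b) < 0` and `x₂` lies on
`b*` with `B(x₂, a) < 0`, then `a⁻¹ x₁ ≠ b⁻¹ x₂`. -/
theorem stmt_16 (a b x₁ x₂ : Matrix (Fin 2) (Fin 2) ℝ)
    (ha : a.det = 1) (hb : b.det = 1) (hx₁ : x₁.det = 1) (hx₂ : x₂.det = 1)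
    (h1 : adsForm x₁ a = 0) (h2 : adsForm x₁ b < 0)
    (h3 : adsForm x₂ b = 0) (h4 : adsForm x₂ a < 0) :
    a⁻¹ * x₁ ≠ b⁻¹ * x₂ := by
  intro h
  have hau : IsUnit a.det := by rw [ha]; exact isUnit_one
  have hbu : IsUnit b.det := by rw [hb]; exact isUnit_one
  set y := a⁻¹ * x₁ with hy
  have e1 : x₁ = a * y := by
    rw [hy, ← Matrix.mul_assoc, Matrix.mul_nonsing_inv a hau, Matrix.one_mul]
  have e2 : x₂ = b * y := by
    rw [h, ← Matrix.mul_assoc, Matrix.mul_nonsing_inv b hbu, Matrix.one_mul]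
  rw [e1] at h1 h2
  rw [e2] at h4
  have key : adsForm (a * y) b + adsForm (b * y) a = 0 := by
    simp only [adsForm, Matrix.det_fin_two, Matrix.add_apply, Matrix.mul_apply,
      Fin.sum_univ_two] at h1 ⊢
    rw [Matrix.det_fin_two] at ha
    linear_combination
      (a 1 1 * b 0 0 - a 1 0 * b 0 1 - a 0 1 * b 1 0 + a 0 0 * b 1 1) * h1 +
      ((a 1 1 * b 0 0 - a 1 0 * b 0 1 - a 0 1 * b 1 0 + a 0 0 * b 1 1) *
        (y 0 0 + y 1 1) / 2) * ha
  linarith
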